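/- Consider long-range percolation on ℤ^d. Let d < β' < 2d, let j ∈ ℕ, and let K(j) ≥ 2 be such that P(D(0,x) ≤ j) ≤ (K(j))^{β'} ‖x‖^{−β'} for all x ∈ ℤ^d with ‖x‖ > K(j). Then E(|B_j|) ≤ 5^d (1 + d/(β' − d)) (K(j))^d. -/

import Mathlib

open MeasureTheory ProbabilityTheory Filter Set
open scoped ENNReal NNReal

noncomputable section

namespace LongRangePercolation

/-- Vertices of the lattice `ℤ^d`. -/
abbrev Vtx (d : ℕ) := Fin d → ℤ

variable {d : ℕ} {Ω : Type*}

/-- The random graph determined by an edge configuration `ω`: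
`x` and `y` are adjacent iff they are distinct and the edge `{x, y}` is open in `ω`. -/
def percGraph (edge : Sym2 (Vtx d) → Ω → Bool) (ω : Ω) : SimpleGraph (Vtx d) where
  Adj x y := x ≠ y ∧ edge s(x, y) ω = true
  symm := by
    constructor
    intro x y h
    refine ⟨h.1.symm, ?_⟩
    rw [Sym2.eq_swap]
    exact h.2
  loopless := by constructor; intro x h; exact h.1 rfl

/-- The event that the origin belongs to an infinite cluster. -/
def percEvent (edge : Sym2 (Vtx d) → Ω → Bool) : Set Ω :=
  {ω | {y : Vtx d | (percGraph edge ω).Reachable 0 y}.Infinite}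

/-- The `k`-ball around the origin in the graph metric. -/
def ball (edge : Sym2 (Vtx d) → Ω → Bool) (ω : Ω) (k : ℕ) : Set (Vtx d) :=
  {y | (percGraph edge ω).edist 0 y ≤ (k : ℕ∞)}

/-- Expected size of the `k`-ball, `E|B_k|`, as an extended nonnegative real. -/
def EB [MeasurableSpace Ω] (μ : Measure Ω) (edge : Sym2 (Vtx d) → Ω → Bool) (k : ℕ) : ℝ≥0∞ :=
  ∫⁻ ω, ((ball edge ω k).encard : ℝ≥0∞) ∂μ

/-- `|B_k|^{1/k}` as an extended nonnegative real. -/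
def growth (edge : Sym2 (Vtx d) → Ω → Bool) (ω : Ω) (k : ℕ) : ℝ≥0∞ :=
  ((ball edge ω k).encard : ℝ≥0∞) ^ (1 / (k : ℝ))

/-- A function `L : (0,∞) → (0,∞)` is slowly varying if `L(cr)/L(r) → 1` as `r → ∞`
for every `c > 0`. -/
def SlowlyVarying (L : ℝ → ℝ) : Prop :=
  ∀ c : ℝ, 0 < c → Tendsto (fun r => L (c * r) / L r) atTop (nhds 1)

/-- Bundled hypotheses asserting that `(μ, edge)` is a homogeneous long-range percolation
model on `ℤ^d` with connection function `lam`: the edge indicators are independent, and an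
edge between distinct `x` and `y` is present with probability `1 - exp(-λ(‖x - y‖))`,
where `‖·‖` is the `L^∞` norm. -/
structure IsLRPModel (d : ℕ) {Ω : Type*} [MeasurableSpace Ω] (μ : Measure Ω)
    (edge : Sym2 (Vtx d) → Ω → Bool) (lam : ℝ → ℝ) : Prop where
  d_pos : 0 < d
  prob : IsProbabilityMeasure μ
  meas : ∀ e, Measurable (edge e)
  indep : iIndepFun edge μ
  lam_pos : ∀ r : ℝ, 0 < r → 0 < lam r
  edge_prob : ∀ x y : Vtx d, x ≠ y →
    μ {ω | edge s(x, y) ω = true} = ENNReal.ofReal (1 - Real.exp (-(lam ‖x - y‖)))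

/-- The percolation graph restricted to a vertex set `V` (only edges inside `V`). -/
def restGraph (edge : Sym2 (Vtx d) → Ω → Bool) (ω : Ω) (V : Set (Vtx d)) :
    SimpleGraph (Vtx d) where
  Adj x y := x ∈ V ∧ y ∈ V ∧ (percGraph edge ω).Adj x y
  symm := by
    constructor
    intro x y h
    exact ⟨h.2.1, h.1, (percGraph edge ω).adj_symm h.2.2⟩
  loopless := by
    constructor
    intro x h
    exact (percGraph edge ω).irrefl h.2.2

/-- The cluster (connected component, as a vertex set) of `x` in a graph `G`. -/
def cluster (G : SimpleGraph (Vtx d)) (x : Vtx d) : Set (Vtx d) :=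
  {y | G.Reachable x y}

/-- The box `V_K = ℤ^d ∩ [⌈-K/2⌉, ⌈K/2⌉)^d`. -/
def VK (d : ℕ) (r : ℕ) : Set (Vtx d) :=
  {x | ∀ i, ⌈-(r : ℝ) / 2⌉ ≤ x i ∧ x i < ⌈(r : ℝ) / 2⌉}

/-- The size of the largest cluster of the percolation graph restricted to `V_r`. -/
def maxClSize (edge : Sym2 (Vtx d) → Ω → Bool) (ω : Ω) (r : ℕ) : ℕ∞ :=
  ⨆ x ∈ VK d r, (cluster (restGraph edge ω (VK d r)) x).encard

/-! ### The renormalisation construction -/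

/-- `l_i = l_0^(2^i)`. -/
def lseq (l0 i : ℕ) : ℕ := l0 ^ (2 ^ i)

/-- The level-`i` block with index `n`:
`Λ_i(n) = ℤ^d ∩ ([-(l_i - 1)/2, (l_i - 1)/2]^d + n l_i)` (for odd `l_0`). -/
def block (d l0 i : ℕ) (n : Vtx d) : Set (Vtx d) :=
  {x | ∀ j, |x j - n j * (lseq l0 i : ℤ)| ≤ ((lseq l0 i : ℤ) - 1) / 2}

/-- The index of the level-`i` block containing `x`. -/
def blockIdx (d l0 i : ℕ) (x : Vtx d) : Vtx d :=
  fun j => Int.fdiv (x j + ((lseq l0 i : ℤ) - 1) / 2) (lseq l0 i : ℤ)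

/-- `h_i = (l_0^d + 1) 2^i - 1`. -/
def hseq (d l0 i : ℕ) : ℕ := (l0 ^ d + 1) * 2 ^ i - 1

/-- `D_i(x)`: the set of vertices of the level-`i` block of `x` within graph distance `h_i`
of `x` in the graph restricted to that block. -/
def Dset (edge : Sym2 (Vtx d) → Ω → Bool) (l0 : ℕ) (ω : Ω) (i : ℕ) (x : Vtx d) :
    Set (Vtx d) :=
  {y | y ∈ block d l0 i (blockIdx d l0 i x) ∧
    (restGraph edge ω (block d l0 i (blockIdx d l0 i x))).edist x y ≤ (hseq d l0 i : ℕ∞)}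

/-- `M_i = Π_{j=0}^i m_j`, defined by `M_0 = ρ l_0^d`, `M_{i+1} = c_0 L(l_{i+1}) M_i^2`
with `c_0 = 2ρ/25`. -/
def Mseq (d l0 : ℕ) (L : ℝ → ℝ) (ρ : ℝ) : ℕ → ℝ
  | 0 => ρ * (l0 : ℝ) ^ d
  | i + 1 => (2 * ρ / 25) * L ((lseq l0 (i + 1) : ℕ) : ℝ) * (Mseq d l0 L ρ i) ^ 2

/-- `m_0 = ρ l_0^d` and `m_{i+1} = c_0 L(l_{i+1}) M_i` with `c_0 = 2ρ/25`. -/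
def mseq (d l0 : ℕ) (L : ℝ → ℝ) (ρ : ℝ) : ℕ → ℝ
  | 0 => ρ * (l0 : ℝ) ^ d
  | i + 1 => (2 * ρ / 25) * L ((lseq l0 (i + 1) : ℕ) : ℝ) * Mseq d l0 L ρ i

/-- `x` is good up to level `i` in configuration `ω`. -/
def good (edge : Sym2 (Vtx d) → Ω → Bool) (l0 : ℕ) (L : ℝ → ℝ) (ρ : ℝ) :
    ℕ → Vtx d → Ω → Prop
  | 0, x, ω =>
      ENNReal.ofReal (mseq d l0 L ρ 0) ≤ ((Dset edge l0 ω 0 x).encard : ℝ≥0∞)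
  | i + 1, x, ω =>
      good edge l0 L ρ i x ω ∧
      ENNReal.ofReal (mseq d l0 L ρ (i + 1)) ≤
        (({n : Vtx d |
            block d l0 i n ⊆ block d l0 (i + 1) (blockIdx d l0 (i + 1) x) ∧
            ∃ y ∈ block d l0 i n,
              y ∉ block d l0 i 0 ∪ block d l0 i (blockIdx d l0 i x) ∧
              good edge l0 L ρ i y ω ∧
              ∃ z ∈ Dset edge l0 ω i x, (percGraph edge ω).Adj y z}).encard : ℝ≥0∞)

/-- A vertex is ultimately good if it is good up to every level. -/
def ultGood (edge : Sym2 (Vtx d) → Ω → Bool) (l0 : ℕ) (L : ℝ → ℝ) (ρ : ℝ)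
    (x : Vtx d) (ω : Ω) : Prop :=
  ∀ i : ℕ, good edge l0 L ρ i x ω

end LongRangePercolation

/-!
`E|B_j| = ∑ₓ P(D(0, x) ≤ j)`. The summands with `‖x‖ ≤ K` are bounded by `1`, and there are at
most `(2K + 1)^d ≤ 5^d K^d` of them. For `‖x‖ > K` we use the hypothesis and group the lattice
points into the shells `‖x‖ = n + 1`, which have at most `2d (2n + 3)^(d - 1)` points. With
`s = β' - d`, the mass of a shell is dominated by the increment `C (n^(-s) - (n + 1)^(-s))`,
`C = 2d (7/3)^(d - 1) / s`, so the tail telescopes to at most `C (K/2)^(-s)`, and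
`K^β' (K/2)^(-s) = 2^s K^d ≤ 2^d K^d`.
-/

namespace SimpleGraph

variable {V : Type*} {G : SimpleGraph V} {u v : V}

theorem edist_le_succ_iff {n : ℕ} :
    G.edist u v ≤ (n + 1 : ℕ) ↔ u = v ∨ ∃ w, G.Adj u w ∧ G.edist w v ≤ n := by
  constructor
  · intro h
    obtain ⟨p, hp⟩ := exists_walk_of_edist_ne_top (ne_top_of_le_ne_top (by simp) h)
    cases p with
    | nil => exact .inl rfl
    | cons hadj q =>
      refine .inr ⟨_, hadj, (edist_le q).trans ?_⟩
      rw [← hp, Walk.length_cons] at h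
      exact_mod_cast Nat.le_of_succ_le_succ (by exact_mod_cast h)
  · rintro (rfl | ⟨w, hadj, hw⟩)
    · simp
    · calc G.edist u v ≤ G.edist u w + G.edist w v := G.edist_triangle
        _ ≤ 1 + n := add_le_add (edist_le_one_iff_adj_or_eq.2 (.inl hadj)) hw
        _ = (n + 1 : ℕ) := by push_cast; ring

end SimpleGraph

theorem measurableSet_edist_le {V Ω : Type*} [Countable V] [MeasurableSpace Ω]
    {G : Ω → SimpleGraph V} (hG : ∀ u v, MeasurableSet {ω | (G ω).Adj u v}) (n : ℕ) (u v : V) :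
    MeasurableSet {ω | (G ω).edist u v ≤ n} := by
  induction n generalizing u with
  | zero =>
    simp only [Nat.cast_zero, nonpos_iff_eq_zero, SimpleGraph.edist_eq_zero_iff]
    exact MeasurableSet.const _
  | succ n ih =>
    simp only [SimpleGraph.edist_le_succ_iff, Set.ofPred_or, Set.ofPred_exists, Set.ofPred_and]
    exact (MeasurableSet.const _).union (.iUnion fun w => (hG u w).inter (ih w))

theorem lintegral_encard_eq_tsum_measure {α Ω : Type*} [Countable α] [MeasurableSpace Ω]
    (μ : Measure Ω) {S : Ω → Set α} (hS : ∀ x, MeasurableSet {ω | x ∈ S ω}) :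
    ∫⁻ ω, ((S ω).encard : ℝ≥0∞) ∂μ = ∑' x, μ {ω | x ∈ S ω} := by
  have hsum (ω : Ω) : ((S ω).encard : ℝ≥0∞) = ∑' x, {ω | x ∈ S ω}.indicator 1 ω := by
    rw [← ENNReal.tsum_set_one, tsum_subtype (S ω) fun _ => 1]
    rfl
  simp_rw [hsum]
  rw [lintegral_tsum fun x => (measurable_one.indicator (hS x)).aemeasurable]
  simp_rw [lintegral_indicator_one (hS _)]

theorem ENNReal.tsum_comp_eq_tsum_encard_mul {α β : Type*} (g : α → β) (f : β → ℝ≥0∞) :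
    ∑' x, f (g x) = ∑' b, (g ⁻¹' {b}).encard * f b := by
  rw [← ENNReal.tsum_fiberwise _ g]
  refine tsum_congr fun b => ?_
  rw [← ENNReal.tsum_set_const]
  exact tsum_congr fun x => by rw [Set.mem_singleton_iff.1 x.2]

theorem ENNReal.tsum_ofReal_sub_succ_le {f : ℕ → ℝ} (hf : Antitone f) (h0 : ∀ n, 0 ≤ f n) :
    ∑' n, ENNReal.ofReal (f n - f (n + 1)) ≤ ENNReal.ofReal (f 0) := by
  refine ENNReal.tsum_le_of_sum_range_le fun N => ?_
  rw [← ENNReal.ofReal_sum_of_nonneg fun n _ => sub_nonneg.2 (hf n.le_succ),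
    Finset.sum_range_sub']
  exact ENNReal.ofReal_le_ofReal (sub_le_self _ (h0 N))

theorem Real.mul_rpow_neg_sub_one_le {s x : ℝ} (hs : 0 ≤ s) (hx : 0 < x) :
    s * (x + 1) ^ (-s - 1) ≤ x ^ (-s) - (x + 1) ^ (-s) := by
  have hy : 0 < x + 1 := by linarith
  have hlog : 1 / (x + 1) ≤ Real.log ((x + 1) / x) := by
    have := Real.one_sub_inv_le_log_of_pos (div_pos hy hx)
    rwa [inv_div, one_sub_div hy.ne', add_sub_cancel_left] at this
  -- `((x + 1) / x) ^ s = exp (s log ((x + 1) / x)) ≥ 1 + s log ((x + 1) / x)`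
  have hratio : 1 + s / (x + 1) ≤ ((x + 1) / x) ^ s := by
    rw [Real.rpow_def_of_pos (div_pos hy hx)]
    have := Real.add_one_le_exp (Real.log ((x + 1) / x) * s)
    have := mul_le_mul_of_nonneg_left hlog hs
    rw [mul_one_div] at this
    linarith
  have hsplit : x ^ (-s) = (x + 1) ^ (-s) * ((x + 1) / x) ^ s := by
    rw [Real.div_rpow hy.le hx.le, Real.rpow_neg hx.le, Real.rpow_neg hy.le]
    field_simp
  calc s * (x + 1) ^ (-s - 1) = (x + 1) ^ (-s) * (s / (x + 1)) := by
        rw [Real.rpow_sub_one hy.ne']; ring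
    _ ≤ (x + 1) ^ (-s) * (((x + 1) / x) ^ s - 1) := by gcongr; linarith
    _ = x ^ (-s) - (x + 1) ^ (-s) := by rw [hsplit]; ring

theorem two_pow_succ_mul_seven_div_three_pow_le {d : ℕ} (hd : 0 < d) :
    (2 : ℝ) ^ (d + 1) * (7 / 3) ^ (d - 1) ≤ 5 ^ d := by
  obtain ⟨e, rfl⟩ := Nat.exists_eq_add_of_lt hd
  calc (2 : ℝ) ^ (0 + e + 1 + 1) * (7 / 3) ^ (0 + e + 1 - 1) = 4 * (14 / 3) ^ e := by
        rw [show 0 + e + 1 - 1 = e by omega, show (14 / 3 : ℝ) = 2 * (7 / 3) by norm_num, mul_pow]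
        ring
    _ ≤ 5 * 5 ^ e := by gcongr <;> norm_num
    _ = 5 ^ (0 + e + 1) := by ring

namespace IntLattice

variable {d : ℕ}

def supNatAbs (x : Fin d → ℤ) : ℕ := Finset.univ.sup fun i => (x i).natAbs

theorem norm_eq_supNatAbs (x : Fin d → ℤ) : ‖x‖ = supNatAbs x := by
  have : ‖x‖₊ = (supNatAbs x : ℝ≥0) := by
    rw [Pi.nnnorm_def]
    simp [supNatAbs, Nat.cast_finsetSup, NNReal.natCast_natAbs]
  exact congrArg NNReal.toReal this

theorem supNatAbs_le_iff {x : Fin d → ℤ} {n : ℕ} :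
    supNatAbs x ≤ n ↔ x ∈ Fintype.piFinset fun _ => Finset.Icc (-n : ℤ) n := by
  simp only [supNatAbs, Finset.sup_le_iff, Finset.mem_univ, true_implies,
    Fintype.mem_piFinset, Finset.mem_Icc]
  exact forall_congr' fun i => by omega

theorem card_piFinset_Icc (n : ℕ) :
    (Fintype.piFinset fun _ : Fin d => Finset.Icc (-n : ℤ) n).card = (2 * n + 1) ^ d := by
  simp only [Fintype.card_piFinset, Int.card_Icc, Finset.prod_const, Finset.card_univ,
    Fintype.card_fin]
  congr 1
  omega

theorem encard_setOf_supNatAbs_le (n : ℕ) :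
    {x : Fin d → ℤ | supNatAbs x ≤ n}.encard = ((2 * n + 1) ^ d : ℕ) := by
  have : {x : Fin d → ℤ | supNatAbs x ≤ n} =
      ↑(Fintype.piFinset fun _ : Fin d => Finset.Icc (-n : ℤ) n) := by
    ext x; simp only [Set.mem_ofPred_eq, Finset.mem_coe, supNatAbs_le_iff]
  rw [this, Set.encard_coe_eq_coe_finsetCard, card_piFinset_Icc]

theorem encard_setOf_supNatAbs_eq_succ_le (n : ℕ) :
    {x : Fin d → ℤ | supNatAbs x = n + 1}.encard ≤ (2 * d * (2 * n + 3) ^ (d - 1) : ℕ) := by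
  set B := fun n : ℕ => Fintype.piFinset fun _ : Fin d => Finset.Icc (-n : ℤ) n
  have hshell : {x : Fin d → ℤ | supNatAbs x = n + 1} = ↑(B (n + 1) \ B n) := by
    ext x
    simp only [Set.mem_ofPred_eq, Finset.coe_sdiff, Set.mem_sdiff, Finset.mem_coe, B,
      ← supNatAbs_le_iff]
    omega
  have hsub : B n ⊆ B (n + 1) := fun x hx => by
    simp only [B, ← supNatAbs_le_iff] at hx ⊢; omega
  rw [hshell, Set.encard_coe_eq_coe_finsetCard, Finset.card_sdiff_of_subset hsub]
  simp only [B, card_piFinset_Icc]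
  have h := abs_pow_sub_pow_le (2 * n + 3 : ℤ) (2 * n + 1) d
  rw [max_eq_left (by rw [abs_of_nonneg (by positivity), abs_of_nonneg (by positivity)]; omega),
    abs_of_nonneg (by positivity : (0 : ℤ) ≤ 2 * n + 3)] at h
  norm_num at h
  have h' : ((2 * n + 3) ^ d : ℤ) ≤ 2 * d * (2 * n + 3) ^ (d - 1) + (2 * n + 1) ^ d := by
    linarith [le_abs_self ((2 * n + 3 : ℤ) ^ d - (2 * n + 1) ^ d)]
  rw [show 2 * (n + 1) + 1 = 2 * n + 3 by ring, Nat.cast_le, Nat.sub_le_iff_le_add]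
  exact_mod_cast h'

theorem encard_setOf_norm_le_le {r : ℝ} (hr : 0 ≤ r) :
    ({x : Fin d → ℤ | ‖x‖ ≤ r}.encard : ℝ≥0∞) ≤ ENNReal.ofReal ((2 * r + 1) ^ d) := by
  have hset : {x : Fin d → ℤ | ‖x‖ ≤ r} = {x | supNatAbs x ≤ ⌊r⌋₊} := by
    ext x
    simp only [Set.mem_ofPred_eq, norm_eq_supNatAbs, Nat.le_floor_iff hr]
  rw [hset, encard_setOf_supNatAbs_le, ENat.toENNReal_coe, ← ENNReal.ofReal_natCast]
  push_cast
  gcongr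
  exact Nat.floor_le hr

theorem encard_setOf_supNatAbs_eq_succ_mul_le (hd : 0 < d) {β : ℝ} (hβ : d < β) {n : ℕ}
    (hn : 2 ≤ n) :
    ({x : Fin d → ℤ | supNatAbs x = n + 1}.encard : ℝ≥0∞) * ENNReal.ofReal (((n : ℝ) + 1) ^ (-β)) ≤
      ENNReal.ofReal (2 * d * (7 / 3) ^ (d - 1) / (β - d) *
        ((n : ℝ) ^ ((d : ℝ) - β) - ((n : ℝ) + 1) ^ ((d : ℝ) - β))) := by
  set s := β - d
  have hs : 0 < s := by linarith
  have hn' : (2 : ℝ) ≤ n := by exact_mod_cast hn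
  have hcount := encard_setOf_supNatAbs_eq_succ_le (d := d) n
  have hcount' : ({x : Fin d → ℤ | supNatAbs x = n + 1}.encard : ℝ≥0∞) ≤
      ENNReal.ofReal (2 * d * (2 * n + 3) ^ (d - 1)) := by
    rw [← ENat.toENNReal_le] at hcount
    refine hcount.trans (le_of_eq ?_)
    rw [ENat.toENNReal_coe, ← ENNReal.ofReal_natCast]
    push_cast; rfl
  refine (mul_le_mul_left hcount' _).trans ?_
  rw [← ENNReal.ofReal_mul (by positivity)]
  apply ENNReal.ofReal_le_ofReal
  have hexp : ((n : ℝ) + 1) ^ (d - 1) * ((n : ℝ) + 1) ^ (-β) = ((n : ℝ) + 1) ^ (-s - 1) := by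
    rw [← Real.rpow_natCast, ← Real.rpow_add (by positivity), Nat.cast_sub hd]
    congr 1
    ring
  have hmvt := Real.mul_rpow_neg_sub_one_le hs.le (by positivity : (0 : ℝ) < n)
  calc 2 * d * (2 * n + 3) ^ (d - 1) * ((n : ℝ) + 1) ^ (-β)
      ≤ 2 * d * ((7 / 3) * ((n : ℝ) + 1)) ^ (d - 1) * ((n : ℝ) + 1) ^ (-β) := by
        gcongr; linarith
    _ = 2 * d * (7 / 3) ^ (d - 1) / s * (s * ((n : ℝ) + 1) ^ (-s - 1)) := by
        rw [mul_pow, ← hexp]; field_simp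
    _ ≤ _ := by rw [show (d : ℝ) - β = -s by ring]; gcongr

theorem tsum_indicator_norm_rpow_neg_le (hd : 0 < d) {β r : ℝ} (hβ : d < β) (hr : 2 ≤ r) :
    ∑' x : Fin d → ℤ, {x | r < ‖x‖}.indicator (fun x => ENNReal.ofReal (‖x‖ ^ (-β))) x ≤
      ENNReal.ofReal (2 * d * (7 / 3) ^ (d - 1) / (β - d) * (r / 2) ^ ((d : ℝ) - β)) := by
  set C : ℝ := 2 * d * (7 / 3) ^ (d - 1) / (β - d)
  have hC : 0 ≤ C := div_nonneg (by positivity) (by linarith)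
  set m := ⌊r⌋₊
  have hm : 2 ≤ m := Nat.le_floor (by exact_mod_cast hr)
  set a : ℕ → ℝ≥0∞ := fun n => if m < n then ENNReal.ofReal ((n : ℝ) ^ (-β)) else 0
  set F : ℕ → ℝ := fun k => C * ((k + m : ℕ) : ℝ) ^ ((d : ℝ) - β)
  have hF_anti : Antitone F := fun i j hij => by
    simp only [F]
    gcongr ?_ * ?_
    exact Real.rpow_le_rpow_of_nonpos (by positivity) (by exact_mod_cast by omega) (by linarith)
  have hind (x : Fin d → ℤ) :
      {x | r < ‖x‖}.indicator (fun x => ENNReal.ofReal (‖x‖ ^ (-β))) x = a (supNatAbs x) := by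
    simp only [Set.indicator_apply, Set.mem_ofPred_eq, a, norm_eq_supNatAbs,
      ← Nat.floor_lt (by linarith : 0 ≤ r), m]
  have hsupp : Function.support (fun n => {x : Fin d → ℤ | supNatAbs x = n}.encard * a n) ⊆
      Set.range (· + (m + 1)) := fun n hn => by
    by_cases h : m < n
    · exact ⟨n - (m + 1), by simp only; omega⟩
    · simp [a, h] at hn
  calc ∑' x : Fin d → ℤ, {x | r < ‖x‖}.indicator (fun x => ENNReal.ofReal (‖x‖ ^ (-β))) x
      = ∑' n, {x : Fin d → ℤ | supNatAbs x = n}.encard * a n := by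
        simp_rw [hind]; exact ENNReal.tsum_comp_eq_tsum_encard_mul _ _
    _ = ∑' k, {x : Fin d → ℤ | supNatAbs x = k + (m + 1)}.encard * a (k + (m + 1)) :=
        ((add_left_injective _).tsum_eq hsupp).symm
    _ ≤ ∑' k, ENNReal.ofReal (F k - F (k + 1)) := by
        refine ENNReal.tsum_le_tsum fun k => ?_
        have hFk : F k - F (k + 1) = C * (((k + m : ℕ) : ℝ) ^ ((d : ℝ) - β) -
            (((k + m : ℕ) : ℝ) + 1) ^ ((d : ℝ) - β)) := by
          simp only [F]; push_cast; ring_nf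
        simp only [a, if_pos (by omega : m < k + (m + 1))]
        rw [hFk, ← add_assoc, Nat.cast_add_one]
        exact encard_setOf_supNatAbs_eq_succ_mul_le hd hβ (by omega)
    _ ≤ ENNReal.ofReal (F 0) :=
        ENNReal.tsum_ofReal_sub_succ_le hF_anti fun k => by simp only [F]; positivity
    _ ≤ _ := by
        refine ENNReal.ofReal_le_ofReal (mul_le_mul_of_nonneg_left ?_ hC)
        refine Real.rpow_le_rpow_of_nonpos (by positivity) ?_ (by linarith)
        have := Nat.lt_floor_add_one r
        push_cast
        linarith

theorem tsum_indicator_rpow_mul_norm_rpow_neg_le (hd : 0 < d) {β r : ℝ} (hβ : d < β)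
    (hβ' : β ≤ 2 * d) (hr : 2 ≤ r) :
    ∑' x : Fin d → ℤ, {x | r < ‖x‖}.indicator (fun x => ENNReal.ofReal (r ^ β * ‖x‖ ^ (-β))) x ≤
      ENNReal.ofReal (5 ^ d * (d / (β - d)) * r ^ d) := by
  have hr0 : 0 < r := by linarith
  have hfactor (x : Fin d → ℤ) :
      {x | r < ‖x‖}.indicator (fun x => ENNReal.ofReal (r ^ β * ‖x‖ ^ (-β))) x =
        ENNReal.ofReal (r ^ β) *
          {x | r < ‖x‖}.indicator (fun x => ENNReal.ofReal (‖x‖ ^ (-β))) x := by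
    simp only [Set.indicator_apply, ENNReal.ofReal_mul (Real.rpow_nonneg hr0.le _), mul_ite,
      mul_zero]
  simp_rw [hfactor]
  rw [ENNReal.tsum_mul_left]
  grw [tsum_indicator_norm_rpow_neg_le hd hβ hr, ← ENNReal.ofReal_mul (by positivity)]
  refine ENNReal.ofReal_le_ofReal ?_
  -- `r ^ β (r / 2) ^ (d - β) = 2 ^ (β - d) r ^ d ≤ 2 ^ d r ^ d`
  have hscale : r ^ β * (r / 2) ^ ((d : ℝ) - β) ≤ 2 ^ d * r ^ d := by
    rw [Real.div_rpow hr0.le zero_le_two, mul_div, ← Real.rpow_add hr0, add_sub_cancel,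
      Real.rpow_natCast, ← neg_sub, Real.rpow_neg zero_le_two, div_inv_eq_mul, mul_comm,
      ← Real.rpow_natCast 2]
    gcongr
    · exact one_le_two
    · linarith
  calc r ^ β * (2 * d * (7 / 3) ^ (d - 1) / (β - d) * (r / 2) ^ ((d : ℝ) - β))
      = 2 * (7 / 3) ^ (d - 1) * (d / (β - d)) * (r ^ β * (r / 2) ^ ((d : ℝ) - β)) := by ring
    _ ≤ 2 * (7 / 3) ^ (d - 1) * (d / (β - d)) * (2 ^ d * r ^ d) := by gcongr
    _ = 2 ^ (d + 1) * (7 / 3) ^ (d - 1) * (d / (β - d)) * r ^ d := by ring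
    _ ≤ 5 ^ d * (d / (β - d)) * r ^ d := by
        gcongr
        exact two_pow_succ_mul_seven_div_three_pow_le hd

end IntLattice

namespace LongRangePercolation

variable {d : ℕ} {Ω : Type*} [MeasurableSpace Ω] {edge : Sym2 (Vtx d) → Ω → Bool}

theorem measurableSet_percGraph_adj (hmeas : ∀ e, Measurable (edge e)) (x y : Vtx d) :
    MeasurableSet {ω | (percGraph edge ω).Adj x y} :=
  (MeasurableSet.const _).inter (hmeas _ (measurableSet_singleton true))

theorem EB_eq_tsum (μ : Measure Ω) (hmeas : ∀ e, Measurable (edge e)) (k : ℕ) :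
    EB μ edge k = ∑' x, μ {ω | (percGraph edge ω).edist 0 x ≤ k} :=
  lintegral_encard_eq_tsum_measure μ fun x =>
    measurableSet_edist_le (measurableSet_percGraph_adj hmeas) k 0 x

end LongRangePercolation

open LongRangePercolation

/-- For long-range percolation on `ℤ^d`, if `d < β' < 2d`, `j ∈ ℕ` and
`K(j) ≥ 2` is such that `P(D(0,x) ≤ j) ≤ K(j)^{β'} ‖x‖^{-β'}` for all `‖x‖ > K(j)`, then
`E|B_j| ≤ 5^d (1 + d/(β' - d)) K(j)^d`. -/
theorem stmt17 {d : ℕ} {Ω : Type*} [MeasurableSpace Ω] (μ : Measure Ω)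
    (edge : Sym2 (Vtx d) → Ω → Bool) (lam : ℝ → ℝ)
    (hmodel : IsLRPModel d μ edge lam)
    (β' : ℝ) (h1 : (d : ℝ) < β') (h2 : β' < 2 * (d : ℝ))
    (j : ℕ) (Kj : ℝ) (hKj : 2 ≤ Kj)
    (hbound : ∀ x : Vtx d, Kj < ‖x‖ →
        μ {ω | (percGraph edge ω).edist 0 x ≤ (j : ℕ∞)} ≤
          ENNReal.ofReal (Kj ^ β' * ‖x‖ ^ (-β'))) :
    EB μ edge j ≤ ENNReal.ofReal ((5 : ℝ) ^ d * (1 + (d : ℝ) / (β' - (d : ℝ))) * Kj ^ d) := by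
  have := hmodel.prob
  have hK : 0 < Kj := by linarith
  set far : Set (Vtx d) := {x | Kj < ‖x‖}
  have hpoint (x : Vtx d) : μ {ω | (percGraph edge ω).edist 0 x ≤ (j : ℕ∞)} ≤
      farᶜ.indicator (fun _ => 1) x +
        far.indicator (fun x => ENNReal.ofReal (Kj ^ β' * ‖x‖ ^ (-β'))) x := by
    by_cases hx : x ∈ far
    · simpa [hx] using hbound x hx
    · simpa [hx] using prob_le_one
  have hnear :
      ∑' x, farᶜ.indicator (fun _ => (1 : ℝ≥0∞)) x ≤ ENNReal.ofReal ((2 * Kj + 1) ^ d) := by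
    rw [← tsum_subtype, ENNReal.tsum_set_one]
    simpa [far, Set.compl_ofPred] using IntLattice.encard_setOf_norm_le_le (d := d) hK.le
  have hfar := IntLattice.tsum_indicator_rpow_mul_norm_rpow_neg_le hmodel.d_pos h1 h2.le hKj
  rw [EB_eq_tsum μ hmodel.meas]
  grw [ENNReal.tsum_le_tsum hpoint, ENNReal.tsum_add, hnear, hfar,
    ← ENNReal.ofReal_add (by positivity) (by positivity)]
  refine ENNReal.ofReal_le_ofReal ?_
  have hnear' : (2 * Kj + 1) ^ d ≤ 5 ^ d * Kj ^ d := by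
    rw [← mul_pow]; gcongr; linarith
  linarith
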